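/- arXiv:1906.12072 — 3 statements merged into one kernel-verified Lean document; each statement's English description precedes it below -/
import Mathlib

section
/- Let a, b ≥ 0. The function z ↦ cosh(a·z + b) · cosh(a/z + b) is non-decreasing on the domain [1, ∞). -/
lemma cosh_prod (X Y : ℝ) :
    Real.cosh X * Real.cosh Y = (Real.cosh (X + Y) + Real.cosh (X - Y)) / 2 := by
  rw [Real.cosh_add, Real.cosh_sub]; ring

theorem stmt1 (a b : ℝ) (ha : 0 ≤ a) (hb : 0 ≤ b) :
    MonotoneOn (fun z => Real.cosh (a * z + b) * Real.cosh (a / z + b)) (Set.Ici (1:ℝ)) := by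
  have key : ∀ z : ℝ, 1 ≤ z →
      Real.cosh (a * z + b) * Real.cosh (a / z + b) =
        (Real.cosh (a * (z + 1/z) + 2*b) + Real.cosh (a * (z - 1/z))) / 2 := by
    intro z hz
    have hz0 : z ≠ 0 := by linarith
    have e1 : (a * z + b) + (a / z + b) = a * (z + 1/z) + 2*b := by field_simp; ring
    have e2 : (a * z + b) - (a / z + b) = a * (z - 1/z) := by field_simp; ring
    rw [cosh_prod, e1, e2]
  intro x hx y hy hxy
  simp only [Set.mem_Ici] at hx hy
  simp only
  rw [key x hx, key y hy]
  have hx0 : (0:ℝ) < x := by linarith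
  have hy0 : (0:ℝ) < y := by linarith
  have hix : 0 < 1/x := by positivity
  have hiy : 0 < 1/y := by positivity
  have hsum : x + 1/x ≤ y + 1/y := by
    have h1 : 0 ≤ (y - x) * (x*y - 1) := mul_nonneg (by linarith) (by nlinarith)
    have h2 : 0 ≤ (y - x) * (x*y - 1) / (x*y) := div_nonneg h1 (by positivity)
    have h3 : (y + 1/y) - (x + 1/x) = (y - x) * (x*y - 1) / (x*y) := by
      field_simp; ring
    linarith
  have hdiff : x - 1/x ≤ y - 1/y := by
    have h1 : 1/y ≤ 1/x := one_div_le_one_div_of_le hx0 hxy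
    linarith
  have hdx : 0 ≤ x - 1/x := by
    have : 1/x ≤ 1 := by rw [div_le_one hx0]; linarith
    linarith
  have hdy : 0 ≤ y - 1/y := le_trans hdx hdiff
  have hsx : 0 ≤ a * (x + 1/x) + 2*b :=
    add_nonneg (mul_nonneg ha (by linarith)) (by linarith)
  have hsy : 0 ≤ a * (y + 1/y) + 2*b :=
    add_nonneg (mul_nonneg ha (by linarith)) (by linarith)
  gcongr (?_ + ?_) / 2
  · rw [Real.cosh_le_cosh, abs_of_nonneg hsx, abs_of_nonneg hsy]
    nlinarith
  · rw [Real.cosh_le_cosh, abs_of_nonneg (mul_nonneg ha hdx),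
      abs_of_nonneg (mul_nonneg ha hdy)]
    exact mul_le_mul_of_nonneg_left hdiff ha
end

section
/- Let 0 < a ≤ a' and b > 0, and let g ≤ g' be positive reals. Then cosh(a·g + b) · cosh(a'·g' + b) ≥ cosh(a·g' + b) · cosh(a'·g + b). -/
theorem stmt2 (a a' b g g' : ℝ) (ha : 0 < a) (haa' : a ≤ a') (hb : 0 < b)
    (hg : 0 < g) (hgg' : g ≤ g') :
    Real.cosh (a * g' + b) * Real.cosh (a' * g + b) ≤
      Real.cosh (a * g + b) * Real.cosh (a' * g' + b) := by
  have key : ∀ x y : ℝ, 2 * (Real.cosh x * Real.cosh y)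
      = Real.cosh (x + y) + Real.cosh (x - y) := by
    intro x y
    rw [Real.cosh_add, Real.cosh_sub]; ring
  have h1 := key (a * g' + b) (a' * g + b)
  have h2 := key (a * g + b) (a' * g' + b)
  have hs : Real.cosh ((a * g' + b) + (a' * g + b))
      ≤ Real.cosh ((a * g + b) + (a' * g' + b)) := by
    rw [Real.cosh_le_cosh]
    have hsum : (a * g' + b) + (a' * g + b) ≤ (a * g + b) + (a' * g' + b) := by
      nlinarith [mul_nonneg (sub_nonneg.2 haa') (sub_nonneg.2 hgg')]
    have hpos : 0 ≤ (a * g' + b) + (a' * g + b) := by nlinarith [mul_pos ha (hg.trans_le hgg'), mul_pos (ha.trans_le haa') hg]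
    rw [abs_of_nonneg hpos, abs_of_nonneg (hpos.trans hsum)]
    exact hsum
  have hd : Real.cosh ((a * g' + b) - (a' * g + b))
      ≤ Real.cosh ((a * g + b) - (a' * g' + b)) := by
    rw [Real.cosh_le_cosh]
    rw [abs_le]
    constructor <;> [skip; skip] <;>
      cases abs_cases ((a * g + b) - (a' * g' + b)) with
      | inl h => nlinarith [h.1, h.2]
      | inr h => nlinarith [h.1, h.2]
  linarith
end

section
/- With the Schur complement notation above: if additionally θ_j^{(k−1)} := 𝟙^⊤ M^{-1} R_j denotes the sum of entries of M^{-1} R_j, θ_{i_k}^{(k−1)} := 𝟙^⊤ M^{-1} r, and θ_j^{(k)} := 𝟙_k^⊤ M̄^{-1} R̄_j (with 𝟙 the all-ones vector), then 1 − θ_j^{(k)} = (1 − θ_j^{(k−1)}) − x·(1 − θ_{i_k}^{(k−1)}) where x = (R_{j,k} − R_j^⊤ M^{-1} r)/(d − r^⊤ M^{-1} r). -/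
/-!
Block elimination: the bordered system `M̄ w = (R, R_k)` is solved by
`w = (M⁻¹ R - x • M⁻¹ r, x)`, where the last row forces `x` times the Schur complement
`d - rᵀ M⁻¹ r` to equal `R_k - rᵀ M⁻¹ R`; summing the entries of `w` gives the identity.
The Schur complement is nonzero because `det M̄ = det M * (d - rᵀ M⁻¹ r)`, and the symmetry of `M`
turns `rᵀ M⁻¹ R` into the `Rᵀ M⁻¹ r` of the statement.
-/

open Matrix

namespace Matrix

variable {ι : Type*} [Fintype ι]

section CommSemiring

variable {S : Type*} [CommSemiring S]

theorem IsSymm.dotProduct_mulVec_comm {B : Matrix ι ι S} (hB : B.IsSymm) (u v : ι → S) :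
    u ⬝ᵥ (B *ᵥ v) = v ⬝ᵥ (B *ᵥ u) := by
  rw [dotProduct_mulVec, ← mulVec_transpose, hB.eq, dotProduct_comm]

theorem fromBlocks_replicateCol_replicateRow_mulVec (A : Matrix ι ι S) (b c : ι → S) (d : S)
    (u : ι → S) (x : S) :
    fromBlocks A (replicateCol Unit b) (replicateRow Unit c) (of fun _ _ => d) *ᵥ
        Sum.elim u (fun _ => x) = Sum.elim (A *ᵥ u + x • b) (fun _ => c ⬝ᵥ u + d * x) := by
  ext (i | _) <;> simp [mulVec, dotProduct, mul_comm]

end CommSemiring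

variable {𝕜 : Type*} [Field 𝕜] [DecidableEq ι] (A : Matrix ι ι 𝕜) (b c : ι → 𝕜) (d : 𝕜)

theorem det_fromBlocks_replicateCol_replicateRow (hA : IsUnit A.det) :
    (fromBlocks A (replicateCol Unit b) (replicateRow Unit c) (of fun _ _ => d)).det =
      A.det * (d - c ⬝ᵥ (A⁻¹ *ᵥ b)) := by
  let := invertibleOfIsUnitDet A hA
  rw [det_fromBlocks₁₁, det_unique (_ - _), Matrix.mul_assoc, ← replicateCol_mulVec,
    invOf_eq_nonsing_inv]
  rfl

theorem inv_fromBlocks_replicateCol_replicateRow_mulVec (hA : IsUnit A.det)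
    (hs : d - c ⬝ᵥ (A⁻¹ *ᵥ b) ≠ 0) (R : ι → 𝕜) (Rk x : 𝕜)
    (hx : x = (Rk - c ⬝ᵥ (A⁻¹ *ᵥ R)) / (d - c ⬝ᵥ (A⁻¹ *ᵥ b))) :
    (fromBlocks A (replicateCol Unit b) (replicateRow Unit c) (of fun _ _ => d))⁻¹ *ᵥ
        Sum.elim R (fun _ => Rk) = Sum.elim (A⁻¹ *ᵥ R - x • (A⁻¹ *ᵥ b)) (fun _ => x) := by
  have hdet := det_fromBlocks_replicateCol_replicateRow A b c d hA
  let := invertibleOfIsUnitDet _ (hdet ▸ hA.mul hs.isUnit)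
  let := invertibleOfIsUnitDet A hA
  refine inv_mulVec_eq_vec ?_
  have hlast : c ⬝ᵥ (A⁻¹ *ᵥ R) + x * (d - c ⬝ᵥ (A⁻¹ *ᵥ b)) = Rk := by
    rw [hx, div_mul_cancel₀ _ hs, add_sub_cancel]
  simp only [fromBlocks_replicateCol_replicateRow_mulVec, mulVec_sub, mulVec_smul, mulVec_mulVec,
    mul_inv_of_invertible, one_mulVec, sub_add_cancel, dotProduct_sub, dotProduct_smul,
    smul_eq_mul, ← hlast]
  congr with
  ring

end Matrix

theorem stmt9 (n : ℕ) (M : Matrix (Fin n) (Fin n) ℝ) (r : Fin n → ℝ) (d : ℝ)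
    (Mbar : Matrix (Fin n ⊕ Unit) (Fin n ⊕ Unit) ℝ)
    (hMbar : Mbar = Matrix.fromBlocks M (Matrix.of fun i _ => r i)
        (Matrix.of fun _ i => r i) (Matrix.of fun _ _ => d))
    (hpd : Mbar.PosDef)
    (Rj : Fin n → ℝ) (Rjk : ℝ) (x : ℝ)
    (hx : x = (Rjk - Rj ⬝ᵥ (M⁻¹ *ᵥ r)) / (d - r ⬝ᵥ (M⁻¹ *ᵥ r))) :
    1 - ∑ idx : Fin n ⊕ Unit, (Mbar⁻¹ *ᵥ (Sum.elim Rj fun _ => Rjk)) idx =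
      (1 - ∑ i : Fin n, (M⁻¹ *ᵥ Rj) i) - x * (1 - ∑ i : Fin n, (M⁻¹ *ᵥ r) i) := by
  change Mbar = fromBlocks M (replicateCol Unit r) (replicateRow Unit r) (of fun _ _ => d) at hMbar
  subst hMbar
  have hsymm : M.IsSymm := isHermitian_iff_isSymm.1 (isHermitian_fromBlocks_iff.1 hpd.1).1
  have hM : IsUnit M.det :=
    (isUnit_iff_isUnit_det M).1 (hpd.submatrix Sum.inl_injective : M.PosDef).isUnit
  have hs : d - r ⬝ᵥ (M⁻¹ *ᵥ r) ≠ 0 := by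
    have hdet := (isUnit_iff_isUnit_det _).1 hpd.isUnit
    rw [det_fromBlocks_replicateCol_replicateRow M r r d hM] at hdet
    exact right_ne_zero_of_mul hdet.ne_zero
  rw [inv_fromBlocks_replicateCol_replicateRow_mulVec M r r d hM hs Rj Rjk x
    (by rw [hx, hsymm.inv.dotProduct_mulVec_comm]), Fintype.sum_sum_type]
  simp only [Sum.elim_inl, Sum.elim_inr, Pi.sub_apply, Pi.smul_apply, smul_eq_mul,
    Finset.sum_sub_distrib, ← Finset.mul_sum, Fintype.sum_unique]
  ring
end
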